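/- arXiv:1103.2261 — 3 statements merged into one kernel-verified Lean document; each statement's English description precedes it below -/
import Mathlib

section
/- Let H be a monoidal prebialgebra (satisfying (lm) and (rm)). Then for all h,k ∈ H: ε̄_s(h)ε_t(k) = ε_t(k)ε̄_s(h), and 1₍₁₎ε̄_s(h) ⊗ 1₍₂₎ = 1₍₁₎ ⊗ 1₍₂₎ε_t(h), where ε_t(h)=ε(1₍₁₎h)1₍₂₎ and ε̄_s(h)=ε(1₍₂₎h)1₍₁₎. -/
open TensorProduct Coalgebra

section Prebialgebra

variable (R H : Type) [CommRing R] [Ring H] [Algebra R H] [Coalgebra R H]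

/-- The target map `ε_t(h) = ε(1₍₁₎h)1₍₂₎`. -/
noncomputable def epsT : H →ₗ[R] H :=
  (TensorProduct.lid R H).toLinearMap ∘ₗ
    TensorProduct.map Coalgebra.counit LinearMap.id ∘ₗ
    LinearMap.mulLeft R (Coalgebra.comul (R := R) (1 : H)) ∘ₗ
    Algebra.TensorProduct.includeLeft.toLinearMap

/-- The source map `ε_s(h) = ε(h1₍₂₎)1₍₁₎`. -/
noncomputable def epsS : H →ₗ[R] H :=
  (TensorProduct.rid R H).toLinearMap ∘ₗ
    TensorProduct.map LinearMap.id Coalgebra.counit ∘ₗ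
    LinearMap.mulRight R (Coalgebra.comul (R := R) (1 : H)) ∘ₗ
    Algebra.TensorProduct.includeRight.toLinearMap

/-- The map `ε̄_s(h) = ε(1₍₂₎h)1₍₁₎`. -/
noncomputable def epsSbar : H →ₗ[R] H :=
  (TensorProduct.rid R H).toLinearMap ∘ₗ
    TensorProduct.map LinearMap.id Coalgebra.counit ∘ₗ
    LinearMap.mulLeft R (Coalgebra.comul (R := R) (1 : H)) ∘ₗ
    Algebra.TensorProduct.includeRight.toLinearMap

/-- The map `ε̄_t(h) = ε(h1₍₁₎)1₍₂₎`. -/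
noncomputable def epsTbar : H →ₗ[R] H :=
  (TensorProduct.lid R H).toLinearMap ∘ₗ
    TensorProduct.map Coalgebra.counit LinearMap.id ∘ₗ
    LinearMap.mulRight R (Coalgebra.comul (R := R) (1 : H)) ∘ₗ
    Algebra.TensorProduct.includeLeft.toLinearMap

/-- The prebialgebra axiom: the comultiplication is multiplicative, `Δ(hk) = Δ(h)Δ(k)`. -/
def ComulMul : Prop :=
  ∀ a b : H,
    Coalgebra.comul (R := R) (a * b) = Coalgebra.comul (R := R) a * Coalgebra.comul (R := R) b

/-- Axiom (lm): `ε(hkl) = ε(hk₍₁₎)ε(k₍₂₎l)` for all `h,k,l`. -/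
noncomputable def LM : Prop :=
  ∀ h k l : H,
    Coalgebra.counit (R := R) (h * k * l) =
      LinearMap.mul' R R
        (TensorProduct.map (Coalgebra.counit ∘ₗ LinearMap.mulLeft R h)
          (Coalgebra.counit ∘ₗ LinearMap.mulRight R l) (Coalgebra.comul k))

/-- Axiom (rm): `ε(hkl) = ε(hk₍₂₎)ε(k₍₁₎l)` for all `h,k,l`. -/
noncomputable def RM : Prop :=
  ∀ h k l : H,
    Coalgebra.counit (R := R) (h * k * l) =
      LinearMap.mul' R R
        (TensorProduct.map (Coalgebra.counit ∘ₗ LinearMap.mulRight R l)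
          (Coalgebra.counit ∘ₗ LinearMap.mulLeft R h) (Coalgebra.comul k))

/-- `Δ²(1) = (id ⊗ Δ)(Δ(1))`, an element of `H ⊗ (H ⊗ H)`. -/
noncomputable def comulSq1 : H ⊗[R] (H ⊗[R] H) :=
  (TensorProduct.map LinearMap.id Coalgebra.comul) (Coalgebra.comul (R := R) (1 : H))

/-- `1₍₁₎ ⊗ 1₍₂₎ ⊗ 1`, an element of `H ⊗ (H ⊗ H)`. -/
noncomputable def d1Left : H ⊗[R] (H ⊗[R] H) :=
  (TensorProduct.map LinearMap.id Algebra.TensorProduct.includeLeft.toLinearMap)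
    (Coalgebra.comul (R := R) (1 : H))

/-- `1 ⊗ 1₍₁₎ ⊗ 1₍₂₎`, an element of `H ⊗ (H ⊗ H)`. -/
noncomputable def d1Right : H ⊗[R] (H ⊗[R] H) :=
  (1 : H) ⊗ₜ[R] (Coalgebra.comul (R := R) (1 : H))

/-- Axiom (lc): `Δ²(1) = 1₍₁₎ ⊗ 1₍₂₎1₍₁'₎ ⊗ 1₍₂'₎`. -/
noncomputable def LC : Prop := comulSq1 R H = d1Left R H * d1Right R H

/-- Axiom (rc): `Δ²(1) = 1₍₁₎ ⊗ 1₍₁'₎1₍₂₎ ⊗ 1₍₂'₎`. -/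
noncomputable def RC : Prop := comulSq1 R H = d1Right R H * d1Left R H

/-- The map `g : H → H*`, `⟨g(h), k⟩ = ε(kh)`. -/
noncomputable def gmap : H →ₗ[R] (H →ₗ[R] R) :=
  LinearMap.llcomp R H H R (Coalgebra.counit (R := R)) ∘ₗ (LinearMap.mul R H).flip

/-- The map `g' : H → H*`, `⟨g'(h), k⟩ = ε(hk)`. -/
noncomputable def gmap' : H →ₗ[R] (H →ₗ[R] R) :=
  LinearMap.llcomp R H H R (Coalgebra.counit (R := R)) ∘ₗ LinearMap.mul R H

/-- The map `f : H* → H`, `f(h*) = ⟨h*,1₍₁₎⟩1₍₂₎`. -/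
noncomputable def fmap (φ : H →ₗ[R] R) : H :=
  (TensorProduct.lid R H)
    ((TensorProduct.map φ LinearMap.id) (Coalgebra.comul (R := R) (1 : H)))

end Prebialgebra

/-!
The key identities are `x ε̄_s(h) = x₍₁₎ ε(x₍₂₎h)` and `x ε_t(k) = ε(x₍₁₎k) x₍₂₎`. For the first,
the counit and the multiplicativity of `Δ` expand `x1₍₁₎ ε(1₍₂₎h)` into
`x₍₁₎1₍₁₎ ε(x₍₂₎1₍₂₎) ε(1₍₃₎h)`; (lm) merges the two counits into `ε(x₍₂₎1₍₂₎h)`, and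
`Δ(x) = Δ(x)Δ(1)` turns this into `x₍₁₎ ε(x₍₂₎h)`. The second is the mirror image, using (rm).
Applied to `x = ε̄_s(h)` and `x = ε_t(k)`, both products become `ε(1₍₁₎k) 1₍₂₎ ε(1₍₃₎h)`;
applied to `x = 1₍₁₎` and `x = 1₍₂₎`, both sides of the second identity become
`1₍₁₎ ε(1₍₂₎h) ⊗ 1₍₃₎`, by coassociativity.
-/

namespace Prebialgebra

open LinearMap

section Contractions

variable {R H : Type*} [CommSemiring R] [Semiring H] [Algebra R H] [Coalgebra R H]

noncomputable def contractRight (h : H) : H ⊗[R] H →ₗ[R] H :=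
  (TensorProduct.rid R H).toLinearMap ∘ₗ lTensor H (counit ∘ₗ mulRight R h)

noncomputable def contractLeft (k : H) : H ⊗[R] H →ₗ[R] H :=
  (TensorProduct.lid R H).toLinearMap ∘ₗ rTensor H (counit ∘ₗ mulRight R k)

noncomputable def counitMiddle : H ⊗[R] (H ⊗[R] H) →ₗ[R] H ⊗[R] H :=
  lTensor H ((TensorProduct.lid R H).toLinearMap ∘ₗ rTensor H (counit (R := R) (A := H)))

@[simp]
lemma contractRight_tmul (h a b : H) :
    contractRight (R := R) h (a ⊗ₜ b) = counit (R := R) (b * h) • a := by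
  simp [contractRight]

@[simp]
lemma contractLeft_tmul (k a b : H) :
    contractLeft (R := R) k (a ⊗ₜ b) = counit (R := R) (a * k) • b := by
  simp [contractLeft]

@[simp]
lemma counitMiddle_tmul (a b c : H) :
    counitMiddle (R := R) (a ⊗ₜ (b ⊗ₜ c)) = counit (R := R) b • (a ⊗ₜ c) := by
  simp [counitMiddle, TensorProduct.tmul_smul]

lemma mul_contractRight (x h : H) (C : H ⊗[R] H) :
    x * contractRight h C = contractRight h ((x ⊗ₜ 1) * C) := by
  rw [← mulLeft_apply (R := R), ← mulLeft_apply (R := R) (x ⊗ₜ 1), mulLeft_tmul, mulLeft_one]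
  have hcomm : mulLeft R x ∘ₗ contractRight h = contractRight h ∘ₗ rTensor H (mulLeft R x) :=
    TensorProduct.ext' fun a b => by simp
  exact LinearMap.congr_fun hcomm C

lemma mul_contractLeft (x k : H) (C : H ⊗[R] H) :
    x * contractLeft k C = contractLeft k ((1 ⊗ₜ x) * C) := by
  rw [← mulLeft_apply (R := R), ← mulLeft_apply (R := R) (1 ⊗ₜ x), mulLeft_tmul, mulLeft_one]
  have hcomm : mulLeft R x ∘ₗ contractLeft k = contractLeft k ∘ₗ lTensor H (mulLeft R x) :=
    TensorProduct.ext' fun a b => by simp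
  exact LinearMap.congr_fun hcomm C

lemma counitMiddle_assoc_tmul (Y : H ⊗[R] H) (c : H) :
    counitMiddle (Algebra.TensorProduct.assoc R R R H H H (Y ⊗ₜ c)) =
      TensorProduct.rid R H (lTensor H counit Y) ⊗ₜ c := by
  induction Y using TensorProduct.induction_on with
  | zero => simp
  | tmul a b => simp [TensorProduct.smul_tmul']
  | add Y Y' hY hY' => simp only [TensorProduct.add_tmul, map_add, hY, hY']

lemma contractLeft_comul_contractRight (k h : H) (C : H ⊗[R] H) :
    contractLeft k (comul (R := R) (contractRight h C)) =
      contractRight h (rTensor H (contractLeft k ∘ₗ comul) C) := by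
  induction C using TensorProduct.induction_on with
  | zero => simp
  | tmul a b => simp
  | add C C' hC hC' => simp only [map_add, hC, hC']

lemma contractRight_comul_contractLeft (h k : H) (C : H ⊗[R] H) :
    contractRight h (comul (R := R) (contractLeft k C)) =
      contractLeft k (lTensor H (contractRight h ∘ₗ comul) C) := by
  induction C using TensorProduct.induction_on with
  | zero => simp
  | tmul a b => simp
  | add C C' hC hC' => simp only [map_add, hC, hC']

lemma rTensor_contractRight (h : H) (Z : (H ⊗[R] H) ⊗[R] H) :
    rTensor H (contractRight h) Z =
      lTensor H (contractLeft h) (TensorProduct.assoc R H H H Z) := by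
  have hmaps : rTensor H (contractRight h) =
      lTensor H (contractLeft h) ∘ₗ (TensorProduct.assoc R H H H).toLinearMap :=
    TensorProduct.ext_threefold fun a b c => by simp [TensorProduct.smul_tmul]
  exact LinearMap.congr_fun hmaps Z

lemma contractRight_rTensor_contractLeft (h k : H) (Z : (H ⊗[R] H) ⊗[R] H) :
    contractRight h (rTensor H (contractLeft k) Z) =
      contractLeft k (lTensor H (contractRight h) (TensorProduct.assoc R H H H Z)) := by
  have hmaps : contractRight h ∘ₗ rTensor H (contractLeft k) =
      contractLeft k ∘ₗ lTensor H (contractRight h) ∘ₗ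
        (TensorProduct.assoc R H H H).toLinearMap :=
    TensorProduct.ext_threefold fun a b c => by simp [smul_smul, mul_comm]
  exact LinearMap.congr_fun hmaps Z

end Contractions

section Monoidal

variable {R H : Type} [CommRing R] [Ring H] [Algebra R H] [Coalgebra R H]

local notation "Δ" => Coalgebra.comul (R := R) (A := H)
local notation "α" => Algebra.TensorProduct.assoc R R R H H H

lemma epsSbar_eq_contractRight (h : H) : epsSbar R H h = contractRight h (Δ 1) := by
  simp [epsSbar, contractRight, ← mulRight_apply (R := R) ((1 : H) ⊗ₜ h), mulRight_tmul,
    mulRight_one, lTensor_def, TensorProduct.map_map]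

lemma epsT_eq_contractLeft (k : H) : epsT R H k = contractLeft k (Δ 1) := by
  simp [epsT, contractLeft, ← mulRight_apply (R := R) (k ⊗ₜ (1 : H)), mulRight_tmul,
    mulRight_one, rTensor_def, TensorProduct.map_map]

lemma tmul_one_mul_eq_counitMiddle (hpre : ComulMul R H) (x : H) (C : H ⊗[R] H) :
    (x ⊗ₜ 1) * C = counitMiddle (α ((Δ x ⊗ₜ 1) * rTensor H Δ C)) := by
  induction C using TensorProduct.induction_on with
  | zero => simp
  | tmul p q =>
    rw [rTensor_tmul, Algebra.TensorProduct.tmul_mul_tmul, Algebra.TensorProduct.tmul_mul_tmul,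
      one_mul, ← hpre, counitMiddle_assoc_tmul, lTensor_counit_comul, TensorProduct.rid_tmul,
      one_smul]
  | add C C' hC hC' => simp only [mul_add, map_add, hC, hC']

lemma one_tmul_mul_eq_counitMiddle (hpre : ComulMul R H) (x : H) (C : H ⊗[R] H) :
    (1 ⊗ₜ x) * C = counitMiddle ((1 ⊗ₜ Δ x) * lTensor H Δ C) := by
  induction C using TensorProduct.induction_on with
  | zero => simp
  | tmul p q =>
    rw [lTensor_tmul, Algebra.TensorProduct.tmul_mul_tmul, Algebra.TensorProduct.tmul_mul_tmul,
      one_mul, ← hpre]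
    simp [counitMiddle]
  | add C C' hC hC' => simp only [mul_add, map_add, hC, hC']

lemma counit_lid_rTensor_mul_of_LM (hlm : LM R H) (b q h : H) :
    counit (TensorProduct.lid R H (rTensor H counit ((b ⊗ₜ 1) * Δ q)) * h) =
      counit (R := R) (b * q * h) := by
  rw [hlm b q h]
  induction Δ q using TensorProduct.induction_on with
  | zero => simp
  | tmul u v => simp
  | add Y Y' hY hY' => simp only [mul_add, map_add, add_mul, hY, hY']

lemma counit_rid_lTensor_mul_of_RM (hrm : RM R H) (a p k : H) :
    counit (TensorProduct.rid R H (lTensor H counit ((1 ⊗ₜ a) * Δ p)) * k) =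
      counit (R := R) (a * p * k) := by
  rw [hrm a p k]
  induction Δ p using TensorProduct.induction_on with
  | zero => simp
  | tmul u v => simp [mul_comm]
  | add Y Y' hY hY' => simp only [mul_add, map_add, add_mul, hY, hY']

lemma contractRight_counitMiddle_mul (hlm : LM R H) (h : H) (A C : H ⊗[R] H) :
    contractRight h (counitMiddle (α (A ⊗ₜ 1) * lTensor H Δ C)) = contractRight h (A * C) := by
  induction A using TensorProduct.induction_on with
  | zero => simp
  | tmul a b =>
    induction C using TensorProduct.induction_on with
    | zero => simp
    | tmul p q =>
      simp only [Algebra.TensorProduct.assoc_tmul, lTensor_tmul,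
        Algebra.TensorProduct.tmul_mul_tmul, counitMiddle]
      simp [counit_lid_rTensor_mul_of_LM hlm, mul_assoc]
    | add C C' hC hC' => simp only [mul_add, map_add, hC, hC']
  | add A A' hA hA' => simp only [TensorProduct.add_tmul, add_mul, map_add, hA, hA']

lemma contractLeft_counitMiddle_mul (hrm : RM R H) (k : H) (A C : H ⊗[R] H) :
    contractLeft k (counitMiddle ((1 ⊗ₜ A) * α (rTensor H Δ C))) = contractLeft k (A * C) := by
  induction A using TensorProduct.induction_on with
  | zero => simp
  | tmul a b =>
    induction C using TensorProduct.induction_on with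
    | zero => simp
    | tmul p q =>
      rw [show (1 : H) ⊗ₜ[R] (a ⊗ₜ[R] b) = α ((1 ⊗ₜ a) ⊗ₜ b) from rfl, rTensor_tmul, ← map_mul,
        Algebra.TensorProduct.tmul_mul_tmul, counitMiddle_assoc_tmul,
        Algebra.TensorProduct.tmul_mul_tmul]
      simp [counit_rid_lTensor_mul_of_RM hrm, mul_assoc]
    | add C C' hC hC' => simp only [mul_add, map_add, hC, hC']
  | add A A' hA hA' => simp only [TensorProduct.tmul_add, add_mul, map_add, hA, hA']

lemma mul_epsSbar (hpre : ComulMul R H) (hlm : LM R H) (x h : H) :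
    x * epsSbar R H h = contractRight h (Δ x) := by
  have hcoassoc : α (rTensor H Δ (Δ 1)) = lTensor H Δ (Δ 1) := coassoc_apply 1
  calc x * epsSbar R H h
      = contractRight h ((x ⊗ₜ 1) * Δ 1) := by
        rw [epsSbar_eq_contractRight, mul_contractRight]
    _ = contractRight h (counitMiddle (α (Δ x ⊗ₜ 1) * lTensor H Δ (Δ 1))) := by
        rw [tmul_one_mul_eq_counitMiddle hpre, map_mul, hcoassoc]
    _ = contractRight h (Δ x) := by
        rw [contractRight_counitMiddle_mul hlm, ← hpre, mul_one]

lemma mul_epsT (hpre : ComulMul R H) (hrm : RM R H) (x k : H) :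
    x * epsT R H k = contractLeft k (Δ x) := by
  have hcoassoc : α (rTensor H Δ (Δ 1)) = lTensor H Δ (Δ 1) := coassoc_apply 1
  calc x * epsT R H k
      = contractLeft k ((1 ⊗ₜ x) * Δ 1) := by
        rw [epsT_eq_contractLeft, mul_contractLeft]
    _ = contractLeft k (counitMiddle ((1 ⊗ₜ Δ x) * α (rTensor H Δ (Δ 1)))) := by
        rw [one_tmul_mul_eq_counitMiddle hpre, hcoassoc]
    _ = contractLeft k (Δ x) := by
        rw [contractLeft_counitMiddle_mul hrm, ← hpre, mul_one]

theorem epsSbar_mul_epsT_comm (hpre : ComulMul R H) (hlm : LM R H) (hrm : RM R H) (h k : H) :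
    epsSbar R H h * epsT R H k = epsT R H k * epsSbar R H h := by
  rw [mul_epsT hpre hrm, mul_epsSbar hpre hlm, epsSbar_eq_contractRight, epsT_eq_contractLeft,
    contractLeft_comul_contractRight, contractRight_comul_contractLeft, rTensor_comp_apply,
    lTensor_comp_apply, contractRight_rTensor_contractLeft, coassoc_apply]

theorem comul_one_mul_epsSbar_tmul_one (hpre : ComulMul R H) (hlm : LM R H) (hrm : RM R H)
    (h : H) : Δ 1 * (epsSbar R H h ⊗ₜ 1) = Δ 1 * (1 ⊗ₜ epsT R H h) := by
  have hSbar : mulRight R (epsSbar R H h) = contractRight h ∘ₗ Δ :=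
    LinearMap.ext fun x => mul_epsSbar hpre hlm x h
  have hT : mulRight R (epsT R H h) = contractLeft h ∘ₗ Δ :=
    LinearMap.ext fun x => mul_epsT hpre hrm x h
  rw [← mulRight_apply (R := R), ← mulRight_apply (R := R) (1 ⊗ₜ _), mulRight_tmul,
    mulRight_tmul, mulRight_one, hSbar, hT, ← rTensor_def, ← lTensor_def, rTensor_comp_apply,
    lTensor_comp_apply, rTensor_contractRight, coassoc_apply]

end Monoidal

end Prebialgebra

/-- In a monoidal prebialgebra, `ε̄_s(h)ε_t(k) = ε_t(k)ε̄_s(h)` and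
`1₍₁₎ε̄_s(h) ⊗ 1₍₂₎ = 1₍₁₎ ⊗ 1₍₂₎ε_t(h)` for all `h,k`. -/
theorem m_epsSbar_epsT_comm
    (R H : Type) [CommRing R] [Ring H] [Algebra R H] [Coalgebra R H]
    (hpre : ComulMul R H) (hlm : LM R H) (hrm : RM R H) :
    (∀ h k : H, epsSbar R H h * epsT R H k = epsT R H k * epsSbar R H h) ∧
    (∀ h : H,
      Coalgebra.comul (R := R) (1 : H) * (epsSbar R H h ⊗ₜ[R] (1 : H)) =
        Coalgebra.comul (R := R) (1 : H) * ((1 : H) ⊗ₜ[R] epsT R H h)) :=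
  ⟨Prebialgebra.epsSbar_mul_epsT_comm hpre hlm hrm,
    Prebialgebra.comul_one_mul_epsSbar_tmul_one hpre hlm hrm⟩
end

section
/- Let H be a monoidal prebialgebra and M a left H-module. Then the map l̄_M: M → H_L* ⊗ M, l̄_M(m) = g(1₍₁₎) ⊗ 1₍₂₎·m, is left H-linear (where H_L* carries the H-action k·g(h) = g(kh)) if and only if H satisfies (lm). Dually, r̄_M(m) = 1₍₁₎·m ⊗ g(1₍₂₎) is H-linear for all M if and only if (rm) holds. Equivalently: (lm) holds iff g(1₍₁₎) ⊗ 1₍₂₎h = g(h₍₁₎) ⊗ h₍₂₎ for all h ∈ H. -/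
open TensorProduct Coalgebra

/-- For a left `H`-module `M` and `m : M`, the `R`-linear map `h ↦ h • m`. -/
noncomputable def actLin (R H : Type) [CommRing R] [Ring H] [Algebra R H]
    (M : Type) [AddCommGroup M] [Module R M] [Module H M] [IsScalarTower R H M]
    (m : M) : H →ₗ[R] M where
  toFun h := h • m
  map_add' a b := add_smul a b m
  map_smul' r a := by simp [smul_assoc]

/-!
Pairing `g(1₍₁₎) ⊗ 1₍₂₎k = g(k₍₁₎) ⊗ k₍₂₎` with `φ ⊗ b ↦ φ(h) ε(bl)` gives
`ε(h1₍₁₎) ε(1₍₂₎kl) = ε(hk₍₁₎) ε(k₍₂₎l)`; for `l = 1` the right side is `ε(hk)`, and feeding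
this back in turns the left side into `ε(hkl)`, which is (lm).

Conversely, (lm) says `g(ax) = g(a₍₁₎) ε(a₍₂₎x)`. With coassociativity of `Δ(1)` this shows that
`g(1₍₁₎) ⊗ 1₍₂₎·t` depends on `t ∈ H ⊗ H` only through `u ↦ ε(u₍₁₎t₍₁₎) u₍₂₎t₍₂₎`, and this map is
right multiplication by `h` both for `t = 1 ⊗ h` and for `t = Δ(h) = Δ(1)Δ(h)`.
The module versions reduce to `M = H`, `m = 1`, and (rm) is the mirror image.
-/

lemma TensorProduct.map_rid_comp_map {R A B C N P : Type*} [CommSemiring R]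
    [AddCommMonoid A] [Module R A] [AddCommMonoid B] [Module R B] [AddCommMonoid C] [Module R C]
    [AddCommMonoid N] [Module R N] [AddCommMonoid P] [Module R P]
    (φ : A →ₗ[R] N) (f : B →ₗ[R] R) (ψ : C →ₗ[R] P) :
    map ((TensorProduct.rid R N).toLinearMap ∘ₗ map φ f) ψ =
      map φ ((TensorProduct.lid R P).toLinearMap ∘ₗ map f ψ) ∘ₗ
        (TensorProduct.assoc R A B C).toLinearMap := by
  ext a b c
  simp [smul_tmul]

section Module

variable {R H : Type} [CommRing R] [Ring H] [Algebra R H]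

lemma actLin_one : actLin R H H 1 = LinearMap.id := by
  ext h
  simp [actLin]

lemma forall_map_actLin_right_iff {ι N : Type*} [AddCommGroup N] [Module R N]
    (f : H →ₗ[R] N) (x y : ι → H ⊗[R] H) :
    (∀ (M : Type) [AddCommGroup M] [Module R M] [Module H M] [IsScalarTower R H M]
        (m : M) (i : ι),
      map f (actLin R H M m) (x i) = map f (actLin R H M m) (y i)) ↔
      ∀ i, map f LinearMap.id (x i) = map f LinearMap.id (y i) := by
  refine ⟨fun S i => by simpa only [actLin_one] using S H 1 i, fun S M _ _ _ _ m i => ?_⟩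
  simpa only [LinearMap.lTensor_map, LinearMap.comp_id] using
    congrArg ((actLin R H M m).lTensor N) (S i)

lemma forall_map_actLin_left_iff {ι N : Type*} [AddCommGroup N] [Module R N]
    (f : H →ₗ[R] N) (x y : ι → H ⊗[R] H) :
    (∀ (M : Type) [AddCommGroup M] [Module R M] [Module H M] [IsScalarTower R H M]
        (m : M) (i : ι),
      map (actLin R H M m) f (x i) = map (actLin R H M m) f (y i)) ↔
      ∀ i, map LinearMap.id f (x i) = map LinearMap.id f (y i) := by
  refine ⟨fun S i => by simpa only [actLin_one] using S H 1 i, fun S M _ _ _ _ m i => ?_⟩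
  simpa only [LinearMap.rTensor_map, LinearMap.comp_id] using
    congrArg ((actLin R H M m).rTensor N) (S i)

end Module

section Prebialgebra

variable {R H : Type} [CommRing R] [Ring H] [Algebra R H] [Coalgebra R H]

@[simp] lemma gmap_apply (h k : H) : gmap R H h k = counit (R := R) (k * h) := rfl

/-- `lmForm h l (a ⊗ b) = ε(ha) ε(bl)`, so that (lm) reads `ε(hkl) = lmForm h l (Δk)`. -/
noncomputable def lmForm (h l : H) : H ⊗[R] H →ₗ[R] R :=
  LinearMap.mul' R R ∘ₗ
    map (counit ∘ₗ LinearMap.mulLeft R h) (counit ∘ₗ LinearMap.mulRight R l)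

@[simp] lemma lmForm_tmul (h l a b : H) :
    lmForm h l (a ⊗ₜ[R] b) = counit (R := R) (h * a) * counit (R := R) (b * l) := rfl

lemma lmForm_mul_one_tmul (h k l : H) (t : H ⊗[R] H) :
    lmForm h l (t * ((1 : H) ⊗ₜ[R] k)) = lmForm h (k * l) t := by
  induction t using TensorProduct.induction_on with
  | zero => simp
  | tmul a b => simp [Algebra.TensorProduct.tmul_mul_tmul, mul_assoc]
  | add t s ht hs => simp only [add_mul, map_add, ht, hs]

lemma lmForm_one_comul (h k : H) : lmForm h 1 (comul k) = counit (R := R) (h * k) := by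
  have : lmForm h 1 = counit ∘ₗ LinearMap.mulLeft R h ∘ₗ
      (TensorProduct.rid R H).toLinearMap ∘ₗ counit.lTensor H := by
    ext a b
    simp [mul_comm]
  simp [this]

lemma lmForm_eq_comp_map_gmap (h l : H) :
    lmForm h l = LinearMap.mul' R R ∘ₗ
      map (LinearMap.applyₗ h) (counit ∘ₗ LinearMap.mulRight R l) ∘ₗ
        map (gmap R H) LinearMap.id := by
  ext a b
  simp

lemma LM.of_forall_map_gmap
    (S : ∀ k : H, map (gmap R H) LinearMap.id (comul (R := R) (1 : H) * ((1 : H) ⊗ₜ[R] k)) =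
      map (gmap R H) LinearMap.id (comul k)) :
    LM R H := by
  have key (h k l : H) : lmForm h (k * l) (comul (R := R) 1) = lmForm h l (comul k) := by
    rw [← lmForm_mul_one_tmul]
    simp only [lmForm_eq_comp_map_gmap, LinearMap.comp_apply, S]
  intro h k l
  calc counit (h * k * l) = lmForm h 1 (comul (k * l)) := by rw [mul_assoc, lmForm_one_comul]
    _ = lmForm h (k * l) (comul 1) := by rw [← key, mul_one]
    _ = lmForm h l (comul k) := key h k l

lemma LM.gmap_mul (hlm : LM R H) (a x : H) :
    gmap R H (a * x) =
      TensorProduct.rid R _ (map (gmap R H) (counit ∘ₗ LinearMap.mulRight R x) (comul a)) := by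
  ext k
  rw [gmap_apply, ← mul_assoc, hlm]
  change lmForm k x _ = _
  generalize comul (R := R) a = t
  induction t using TensorProduct.induction_on with
  | zero => simp
  | tmul b c => simp [mul_comm]
  | add t s ht hs => simp only [map_add, LinearMap.add_apply, ht, hs]

/-- `counitLMul t u = ε(u₍₁₎t₍₁₎) u₍₂₎t₍₂₎`. -/
noncomputable def counitLMul (t : H ⊗[R] H) : H →ₗ[R] H :=
  (TensorProduct.lid R H).toLinearMap ∘ₗ counit.rTensor H ∘ₗ
    LinearMap.mulRight R t ∘ₗ comul

lemma counitLMul_one_tmul (h : H) : counitLMul ((1 : H) ⊗ₜ[R] h) = LinearMap.mulRight R h := by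
  ext u
  simp only [counitLMul, LinearMap.comp_apply, LinearMap.mulRight_tmul]
  rw [LinearMap.mulRight_one, LinearMap.rTensor_map, LinearMap.comp_id,
    ← LinearMap.lTensor_comp_rTensor, LinearMap.comp_apply, Coalgebra.rTensor_counit_comul]
  simp

lemma counitLMul_comul (hpre : ComulMul R H) (h : H) :
    counitLMul (comul (R := R) h) = LinearMap.mulRight R h := by
  ext u
  simp [counitLMul, ← hpre u h]

lemma counitLMul_tmul (x y : H) :
    counitLMul (x ⊗ₜ[R] y) = (TensorProduct.lid R H).toLinearMap ∘ₗ
      map (counit ∘ₗ LinearMap.mulRight R x) (LinearMap.mulRight R y) ∘ₗ comul := by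
  rw [counitLMul, LinearMap.mulRight_tmul, ← LinearMap.comp_assoc (g := map _ _),
    LinearMap.rTensor_comp_map]

lemma LM.map_gmap_comul_one_mul (hlm : LM R H) (t : H ⊗[R] H) :
    map (gmap R H) LinearMap.id (comul (R := R) (1 : H) * t) =
      map (gmap R H) (counitLMul t) (comul 1) := by
  induction t using TensorProduct.induction_on with
  | zero => simp [counitLMul]
  | add t s ht hs =>
    have hadd : counitLMul (t + s) = counitLMul t + counitLMul s := by
      ext u
      simp [counitLMul, mul_add]
    rw [mul_add, map_add, ht, hs, hadd, map_add_right, LinearMap.add_apply]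
  | tmul x y =>
    have hg : gmap R H ∘ₗ LinearMap.mulRight R x = (TensorProduct.rid R _).toLinearMap ∘ₗ
        map (gmap R H) (counit ∘ₗ LinearMap.mulRight R x) ∘ₗ comul :=
      LinearMap.ext (hlm.gmap_mul · x)
    calc map (gmap R H) LinearMap.id (comul (R := R) (1 : H) * (x ⊗ₜ[R] y))
        = map (gmap R H ∘ₗ LinearMap.mulRight R x) (LinearMap.mulRight R y) (comul 1) := by
          rw [← LinearMap.mulRight_apply (R := R), LinearMap.mulRight_tmul,
            ← LinearMap.comp_apply, ← map_comp, LinearMap.id_comp]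
      _ = map ((TensorProduct.rid R _).toLinearMap ∘ₗ
            map (gmap R H) (counit ∘ₗ LinearMap.mulRight R x)) (LinearMap.mulRight R y)
            (comul.rTensor H (comul 1)) := by
          rw [hg, LinearMap.map_rTensor, LinearMap.comp_assoc]
      _ = map (gmap R H) ((TensorProduct.lid R H).toLinearMap ∘ₗ
            map (counit ∘ₗ LinearMap.mulRight R x) (LinearMap.mulRight R y))
            (TensorProduct.assoc R H H H (comul.rTensor H (comul 1))) := by
          rw [map_rid_comp_map]; rfl
      _ = map (gmap R H) (counitLMul (x ⊗ₜ[R] y)) (comul 1) := by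
          rw [Coalgebra.coassoc_apply, LinearMap.map_lTensor, counitLMul_tmul, LinearMap.comp_assoc]

lemma forall_map_gmap_eq_iff_LM (hpre : ComulMul R H) :
    (∀ h : H, map (gmap R H) LinearMap.id (comul (R := R) (1 : H) * ((1 : H) ⊗ₜ[R] h)) =
      map (gmap R H) LinearMap.id (comul h)) ↔ LM R H := by
  refine ⟨LM.of_forall_map_gmap, fun hlm h => ?_⟩
  rw [hlm.map_gmap_comul_one_mul, counitLMul_one_tmul, ← counitLMul_comul hpre,
    ← hlm.map_gmap_comul_one_mul, ← hpre, one_mul]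

/-- `rmForm h l (a ⊗ b) = ε(al) ε(hb)`, so that (rm) reads `ε(hkl) = rmForm h l (Δk)`. -/
noncomputable def rmForm (h l : H) : H ⊗[R] H →ₗ[R] R :=
  LinearMap.mul' R R ∘ₗ
    map (counit ∘ₗ LinearMap.mulRight R l) (counit ∘ₗ LinearMap.mulLeft R h)

@[simp] lemma rmForm_tmul (h l a b : H) :
    rmForm h l (a ⊗ₜ[R] b) = counit (R := R) (a * l) * counit (R := R) (h * b) := rfl

lemma rmForm_mul_tmul_one (h k l : H) (t : H ⊗[R] H) :
    rmForm h l (t * (k ⊗ₜ[R] (1 : H))) = rmForm h (k * l) t := by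
  induction t using TensorProduct.induction_on with
  | zero => simp
  | tmul a b => simp [Algebra.TensorProduct.tmul_mul_tmul, mul_assoc]
  | add t s ht hs => simp only [add_mul, map_add, ht, hs]

lemma rmForm_one_comul (h k : H) : rmForm h 1 (comul k) = counit (R := R) (h * k) := by
  have : rmForm h 1 = counit ∘ₗ LinearMap.mulLeft R h ∘ₗ
      (TensorProduct.lid R H).toLinearMap ∘ₗ counit.rTensor H := by
    ext a b
    simp
  simp [this]

lemma rmForm_eq_comp_map_gmap (h l : H) :
    rmForm h l = LinearMap.mul' R R ∘ₗ
      map (counit ∘ₗ LinearMap.mulRight R l) (LinearMap.applyₗ h) ∘ₗ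
        map LinearMap.id (gmap R H) := by
  ext a b
  simp

lemma RM.of_forall_map_gmap
    (S : ∀ k : H, map LinearMap.id (gmap R H) (comul (R := R) (1 : H) * (k ⊗ₜ[R] (1 : H))) =
      map LinearMap.id (gmap R H) (comul k)) :
    RM R H := by
  have key (h k l : H) : rmForm h (k * l) (comul (R := R) 1) = rmForm h l (comul k) := by
    rw [← rmForm_mul_tmul_one]
    simp only [rmForm_eq_comp_map_gmap, LinearMap.comp_apply, S]
  intro h k l
  calc counit (h * k * l) = rmForm h 1 (comul (k * l)) := by rw [mul_assoc, rmForm_one_comul]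
    _ = rmForm h (k * l) (comul 1) := by rw [← key, mul_one]
    _ = rmForm h l (comul k) := key h k l

lemma RM.gmap_mul (hrm : RM R H) (a x : H) :
    gmap R H (a * x) =
      TensorProduct.lid R _ (map (counit ∘ₗ LinearMap.mulRight R x) (gmap R H) (comul a)) := by
  ext k
  rw [gmap_apply, ← mul_assoc, hrm]
  change rmForm k x _ = _
  generalize comul (R := R) a = t
  induction t using TensorProduct.induction_on with
  | zero => simp
  | tmul b c => simp
  | add t s ht hs => simp only [map_add, LinearMap.add_apply, ht, hs]

/-- `counitRMul t u = u₍₁₎t₍₁₎ ε(u₍₂₎t₍₂₎)`. -/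
noncomputable def counitRMul (t : H ⊗[R] H) : H →ₗ[R] H :=
  (TensorProduct.rid R H).toLinearMap ∘ₗ counit.lTensor H ∘ₗ
    LinearMap.mulRight R t ∘ₗ comul

lemma counitRMul_tmul_one (h : H) : counitRMul (h ⊗ₜ[R] (1 : H)) = LinearMap.mulRight R h := by
  ext u
  simp only [counitRMul, LinearMap.comp_apply, LinearMap.mulRight_tmul]
  rw [LinearMap.mulRight_one, LinearMap.lTensor_map, LinearMap.comp_id,
    ← LinearMap.rTensor_comp_lTensor, LinearMap.comp_apply, Coalgebra.lTensor_counit_comul]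
  simp

lemma counitRMul_comul (hpre : ComulMul R H) (h : H) :
    counitRMul (comul (R := R) h) = LinearMap.mulRight R h := by
  ext u
  simp [counitRMul, ← hpre u h]

lemma counitRMul_tmul (x y : H) :
    counitRMul (x ⊗ₜ[R] y) = (TensorProduct.rid R H).toLinearMap ∘ₗ
      map (LinearMap.mulRight R x) (counit ∘ₗ LinearMap.mulRight R y) ∘ₗ comul := by
  rw [counitRMul, LinearMap.mulRight_tmul, ← LinearMap.comp_assoc (g := map _ _),
    LinearMap.lTensor_comp_map]

lemma RM.map_gmap_comul_one_mul (hrm : RM R H) (t : H ⊗[R] H) :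
    map LinearMap.id (gmap R H) (comul (R := R) (1 : H) * t) =
      map (counitRMul t) (gmap R H) (comul 1) := by
  induction t using TensorProduct.induction_on with
  | zero => simp [counitRMul]
  | add t s ht hs =>
    have hadd : counitRMul (t + s) = counitRMul t + counitRMul s := by
      ext u
      simp [counitRMul, mul_add]
    rw [mul_add, map_add, ht, hs, hadd, map_add_left, LinearMap.add_apply]
  | tmul x y =>
    have hg : gmap R H ∘ₗ LinearMap.mulRight R y = (TensorProduct.lid R _).toLinearMap ∘ₗ
        map (counit ∘ₗ LinearMap.mulRight R y) (gmap R H) ∘ₗ comul :=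
      LinearMap.ext (hrm.gmap_mul · y)
    calc map LinearMap.id (gmap R H) (comul (R := R) (1 : H) * (x ⊗ₜ[R] y))
        = map (LinearMap.mulRight R x) (gmap R H ∘ₗ LinearMap.mulRight R y) (comul 1) := by
          rw [← LinearMap.mulRight_apply (R := R), LinearMap.mulRight_tmul,
            ← LinearMap.comp_apply, ← map_comp, LinearMap.id_comp]
      _ = map (LinearMap.mulRight R x) ((TensorProduct.lid R _).toLinearMap ∘ₗ
            map (counit ∘ₗ LinearMap.mulRight R y) (gmap R H))
            (TensorProduct.assoc R H H H (comul.rTensor H (comul 1))) := by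
          rw [hg, Coalgebra.coassoc_apply, LinearMap.map_lTensor, LinearMap.comp_assoc]
      _ = map ((TensorProduct.rid R H).toLinearMap ∘ₗ
            map (LinearMap.mulRight R x) (counit ∘ₗ LinearMap.mulRight R y)) (gmap R H)
            (comul.rTensor H (comul 1)) := by
          rw [map_rid_comp_map]; rfl
      _ = map (counitRMul (x ⊗ₜ[R] y)) (gmap R H) (comul 1) := by
          rw [LinearMap.map_rTensor, counitRMul_tmul, LinearMap.comp_assoc]

lemma forall_map_gmap_eq_iff_RM (hpre : ComulMul R H) :
    (∀ h : H, map LinearMap.id (gmap R H) (comul (R := R) (1 : H) * (h ⊗ₜ[R] (1 : H))) =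
      map LinearMap.id (gmap R H) (comul h)) ↔ RM R H := by
  refine ⟨RM.of_forall_map_gmap, fun hrm h => ?_⟩
  rw [hrm.map_gmap_comul_one_mul, counitRMul_tmul_one, ← counitRMul_comul hpre,
    ← hrm.map_gmap_comul_one_mul, ← hpre, one_mul]

end Prebialgebra

/-- For a monoidal prebialgebra `H`:
the map `l̄_M(m) = g(1₍₁₎) ⊗ 1₍₂₎·m` is left `H`-linear for every left `H`-module `M`
(with the action `k·g(h) = g(kh)` on `H_L*`) iff (lm) holds, iff
`g(1₍₁₎) ⊗ 1₍₂₎h = g(h₍₁₎) ⊗ h₍₂₎` for all `h`; dually, `r̄_M(m) = 1₍₁₎·m ⊗ g(1₍₂₎)`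
is `H`-linear for every `M` iff (rm) holds, iff `1₍₁₎h ⊗ g(1₍₂₎) = h₍₁₎ ⊗ g(h₍₂₎)`. -/
theorem lbar_rbar_linear_iff
    (R H : Type) [CommRing R] [Ring H] [Algebra R H] [Coalgebra R H]
    (hpre : ComulMul R H) :
    ((∀ (M : Type) [AddCommGroup M] [Module R M] [Module H M] [IsScalarTower R H M]
        (m : M) (h : H),
        (TensorProduct.map (gmap R H) (actLin R H M m))
            (Coalgebra.comul (R := R) (1 : H) * ((1 : H) ⊗ₜ[R] h)) =
          (TensorProduct.map (gmap R H) (actLin R H M m)) (Coalgebra.comul (R := R) h)) ↔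
      LM R H) ∧
    ((∀ h : H,
        (TensorProduct.map (gmap R H) LinearMap.id)
            (Coalgebra.comul (R := R) (1 : H) * ((1 : H) ⊗ₜ[R] h)) =
          (TensorProduct.map (gmap R H) LinearMap.id) (Coalgebra.comul (R := R) h)) ↔
      LM R H) ∧
    ((∀ (M : Type) [AddCommGroup M] [Module R M] [Module H M] [IsScalarTower R H M]
        (m : M) (h : H),
        (TensorProduct.map (actLin R H M m) (gmap R H))
            (Coalgebra.comul (R := R) (1 : H) * (h ⊗ₜ[R] (1 : H))) =
          (TensorProduct.map (actLin R H M m) (gmap R H)) (Coalgebra.comul (R := R) h)) ↔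
      RM R H) ∧
    ((∀ h : H,
        (TensorProduct.map LinearMap.id (gmap R H))
            (Coalgebra.comul (R := R) (1 : H) * (h ⊗ₜ[R] (1 : H))) =
          (TensorProduct.map LinearMap.id (gmap R H)) (Coalgebra.comul (R := R) h)) ↔
      RM R H) :=
  ⟨(forall_map_actLin_right_iff _ _ _).trans (forall_map_gmap_eq_iff_LM hpre),
    forall_map_gmap_eq_iff_LM hpre,
    (forall_map_actLin_left_iff _ _ _).trans (forall_map_gmap_eq_iff_RM hpre),
    forall_map_gmap_eq_iff_RM hpre⟩
end

section
/- Let H be a weak bialgebra, i.e. a prebialgebra satisfying all four axioms (lm), (rm), (lc), (rc). Then H_t = Im(ε_t) is a Frobenius separable k-algebra with separability idempotent e_t = ε_t(1₍₁₎) ⊗ 1₍₂₎ and Frobenius functional the restriction of ε: that is, z·e_t = e_t·z for all z ∈ H_t (componentwise in H_t⊗H_t), ε(ε_t(1₍₁₎))1₍₂₎ = 1 = ε_t(1₍₁₎)ε(1₍₂₎), and ε_t(1₍₁₎)1₍₂₎ = 1. -/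
open TensorProduct Coalgebra

/-! Everything reduces to identities of `ε_t`, proved against a fixed finite representation
`Δ(1) = ∑ 1₍₁₎ ⊗ 1₍₂₎`. Axiom (rm) gives `ε(x ε_t(y)) = ε(xy)`, hence `ε_t` is idempotent
and `ε_t(x ε_t(y)) = ε_t(xy)`; dually (lm) gives `ε_t ∘ ε̄_s = ε_t`. Multiplicativity of `Δ`
with (rc) shows `Δ(1) ∈ H ⊗ H_t` and, for `z ∈ H_t`, `(1 ⊗ z)Δ(1) ∈ H ⊗ H_t`, which yields
`z ε_t(x) = ε_t(zx)`; so `(z ⊗ 1)e_t = (ε_t ⊗ id)((z ⊗ 1)Δ(1))`. With (lc) instead,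
`Δ(1)(1 ⊗ z) = (ε̄_s ⊗ id)((z ⊗ 1)Δ(1))`, so `e_t(1 ⊗ z) = (ε_t ε̄_s ⊗ id)((z ⊗ 1)Δ(1))`
is the same element. The normalisations of `e_t` follow from the counit axioms and
`Δ(1)² = Δ(1)`. -/

theorem Coalgebra.sum_counit_right_smul {R A ι : Type*} [CommSemiring R] [AddCommMonoid A]
    [Module R A] [Coalgebra R A] {a : A} (𝓡 : Coalgebra.Repr R a ι) :
    ∑ i ∈ 𝓡.index, counit (R := R) (𝓡.right i) • 𝓡.left i = a := by
  have h := congrArg (_root_.TensorProduct.rid R A) (sum_tmul_counit_eq 𝓡)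
  simp only [map_sum, _root_.TensorProduct.rid_tmul, one_smul] at h
  exact h

namespace WeakBialgebra

variable {R H : Type} [CommRing R] [Ring H] [Algebra R H] [Coalgebra R H]
  {ι : Type*} (𝓡 : Coalgebra.Repr R (1 : H) ι)

local notation "ε" => Coalgebra.counit (R := R) (A := H)
local notation "Δ" => Coalgebra.comul (R := R) (A := H)
local notation "εₜ" => epsT R H

theorem epsT_eq_sum (x : H) :
    εₜ x = ∑ i ∈ 𝓡.index, ε (𝓡.left i * x) • 𝓡.right i := by
  simp [epsT, ← 𝓡.eq, Finset.sum_mul, map_sum]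

theorem epsSbar_eq_sum (x : H) :
    epsSbar R H x = ∑ i ∈ 𝓡.index, ε (𝓡.right i * x) • 𝓡.left i := by
  simp [epsSbar, ← 𝓡.eq, Finset.sum_mul, map_sum]

theorem epsT_apply (x : H) :
    εₜ x = TensorProduct.lid R H (LinearMap.rTensor H ε (Δ 1 * (x ⊗ₜ[R] 1))) := rfl

theorem epsTbar_apply (x : H) :
    epsTbar R H x = TensorProduct.lid R H (LinearMap.rTensor H ε ((x ⊗ₜ[R] 1) * Δ 1)) := rfl

theorem epsTbar_eq_sum (x : H) :
    epsTbar R H x = ∑ i ∈ 𝓡.index, ε (x * 𝓡.left i) • 𝓡.right i := by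
  simp [epsTbar, ← 𝓡.eq, Finset.mul_sum, map_sum]

theorem epsT_one : εₜ 1 = 1 := by
  simpa [epsT_eq_sum (ℛ R 1)] using sum_counit_smul (ℛ R 1)

theorem counit_epsT (x : H) : ε (εₜ x) = ε x := by
  conv_rhs => rw [← one_mul x, ← sum_counit_right_smul (ℛ R 1)]
  simp [epsT_eq_sum (ℛ R 1), Finset.sum_mul, mul_comm]

theorem counit_mul_eq_sum_of_LM (hlm : LM R H) (x y : H) :
    ε (x * y) = ∑ i ∈ 𝓡.index, ε (x * 𝓡.left i) * ε (𝓡.right i * y) := by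
  simpa [← 𝓡.eq, map_sum] using hlm x 1 y

theorem counit_mul_eq_sum_of_RM (hrm : RM R H) (x y : H) :
    ε (x * y) = ∑ i ∈ 𝓡.index, ε (x * 𝓡.right i) * ε (𝓡.left i * y) := by
  simpa [← 𝓡.eq, map_sum, mul_comm] using hrm x 1 y

theorem counit_mul_epsT (hrm : RM R H) (x y : H) : ε (x * εₜ y) = ε (x * y) := by
  simp [epsT_eq_sum (ℛ R 1), counit_mul_eq_sum_of_RM (ℛ R 1) hrm x y,
    Finset.mul_sum, mul_comm]

theorem counit_mul_epsSbar (hlm : LM R H) (x y : H) : ε (x * epsSbar R H y) = ε (x * y) := by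
  simp [epsSbar_eq_sum (ℛ R 1), counit_mul_eq_sum_of_LM (ℛ R 1) hlm x y,
    Finset.mul_sum, mul_comm]

theorem epsT_mul_epsT_right (hrm : RM R H) (x y : H) : εₜ (x * εₜ y) = εₜ (x * y) := by
  simp [epsT_eq_sum (ℛ R 1) (x * _), ← mul_assoc, counit_mul_epsT hrm]

theorem epsT_epsT (hrm : RM R H) (x : H) : εₜ (εₜ x) = εₜ x := by
  simpa using epsT_mul_epsT_right hrm 1 x

theorem epsT_epsSbar (hlm : LM R H) (x : H) : εₜ (epsSbar R H x) = εₜ x := by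
  simp [epsT_eq_sum (ℛ R 1), counit_mul_epsSbar hlm]

theorem sum_tmul_comul_eq_of_LC (hlc : LC R H) :
    ∑ i ∈ 𝓡.index, 𝓡.left i ⊗ₜ[R] Δ (𝓡.right i) =
      ∑ i ∈ 𝓡.index, 𝓡.left i ⊗ₜ[R] ((𝓡.right i ⊗ₜ[R] (1 : H)) * Δ 1) := by
  have h : comulSq1 R H = d1Left R H * d1Right R H := hlc
  simpa [comulSq1, d1Left, d1Right, ← 𝓡.eq, map_sum, Finset.sum_mul, Finset.mul_sum] using h

theorem sum_tmul_comul_eq_of_RC (hrc : RC R H) :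
    ∑ i ∈ 𝓡.index, 𝓡.left i ⊗ₜ[R] Δ (𝓡.right i) =
      ∑ i ∈ 𝓡.index, 𝓡.left i ⊗ₜ[R] (Δ 1 * (𝓡.right i ⊗ₜ[R] (1 : H))) := by
  have h : comulSq1 R H = d1Right R H * d1Left R H := hrc
  simpa [comulSq1, d1Left, d1Right, ← 𝓡.eq, map_sum, Finset.sum_mul, Finset.mul_sum] using h

theorem comul_epsT_of_LC (hlc : LC R H) (h : H) : Δ (εₜ h) = (εₜ h ⊗ₜ[R] 1) * Δ 1 := by
  have key := congrArg ((TensorProduct.lid R (H ⊗[R] H)).toLinearMap ∘ₗ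
    (ε ∘ₗ LinearMap.mulRight R h).rTensor (H ⊗[R] H)) (sum_tmul_comul_eq_of_LC (ℛ R 1) hlc)
  simp only [map_sum, LinearMap.comp_apply, LinearMap.rTensor_tmul, LinearEquiv.coe_coe,
    TensorProduct.lid_tmul, LinearMap.mulRight_apply] at key
  simp [epsT_eq_sum (ℛ R 1), map_sum, key, TensorProduct.sum_tmul, Finset.sum_mul,
    ← TensorProduct.smul_tmul']

theorem comul_epsT_of_RC (hrc : RC R H) (h : H) : Δ (εₜ h) = Δ 1 * (εₜ h ⊗ₜ[R] 1) := by
  have key := congrArg ((TensorProduct.lid R (H ⊗[R] H)).toLinearMap ∘ₗ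
    (ε ∘ₗ LinearMap.mulRight R h).rTensor (H ⊗[R] H)) (sum_tmul_comul_eq_of_RC (ℛ R 1) hrc)
  simp only [map_sum, LinearMap.comp_apply, LinearMap.rTensor_tmul, LinearEquiv.coe_coe,
    TensorProduct.lid_tmul, LinearMap.mulRight_apply] at key
  simp [epsT_eq_sum (ℛ R 1), map_sum, key, TensorProduct.sum_tmul, Finset.mul_sum,
    ← TensorProduct.smul_tmul']

theorem lTensor_epsT_comul_one (hrc : RC R H) : (εₜ).lTensor H (Δ 1) = Δ 1 := by
  have key := congrArg
    (((TensorProduct.lid R H).toLinearMap ∘ₗ LinearMap.rTensor H ε).lTensor H)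
    (sum_tmul_comul_eq_of_RC (ℛ R 1) hrc)
  simp only [map_sum, LinearMap.lTensor_tmul, LinearMap.comp_apply, rTensor_counit_comul,
    LinearEquiv.coe_coe, TensorProduct.lid_tmul, one_smul, Repr.eq, ← epsT_apply] at key
  conv_lhs => rw [← (ℛ R (1 : H)).eq]
  rw [map_sum]
  simp only [LinearMap.lTensor_tmul]
  exact key.symm

theorem lTensor_epsT_one_tmul_epsT_mul_comul_one (hpre : ComulMul R H) (hrc : RC R H) (h : H) :
    (εₜ).lTensor H ((1 ⊗ₜ[R] εₜ h) * Δ 1) = (1 ⊗ₜ[R] εₜ h) * Δ 1 := by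
  set z := εₜ h
  -- Applied to the last two factors of (rc): `Δ(z)Δ(1) = Δ(z) = Δ(1)(z ⊗ 1)` produces `ε_t`.
  let f : H ⊗[R] H →ₗ[R] H := (TensorProduct.lid R H).toLinearMap ∘ₗ
    LinearMap.rTensor H ε ∘ₗ LinearMap.mulLeft R (Δ z)
  have hf_comul (x : H) : f (Δ x) = z * x := by
    simp [f, ← hpre z x]
  have hf_comul_one_mul (x : H) : f (Δ 1 * (x ⊗ₜ[R] 1)) = εₜ (z * x) := by
    simp only [f, LinearMap.comp_apply, LinearMap.mulLeft_apply, ← mul_assoc, ← hpre z 1,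
      mul_one]
    rw [comul_epsT_of_RC hrc h, mul_assoc, Algebra.TensorProduct.tmul_mul_tmul, one_mul]
    exact (epsT_apply _).symm
  have key := congrArg (LinearMap.lTensor H f) (sum_tmul_comul_eq_of_RC (ℛ R 1) hrc)
  simp only [map_sum, LinearMap.lTensor_tmul, hf_comul, hf_comul_one_mul] at key
  rw [← (ℛ R (1 : H)).eq, Finset.mul_sum, map_sum]
  simp only [Algebra.TensorProduct.tmul_mul_tmul, one_mul, LinearMap.lTensor_tmul]
  exact key.symm

theorem lTensor_epsTbar_comul_one_mul_one_tmul_epsT (hpre : ComulMul R H) (hlc : LC R H) (h : H) :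
    (epsTbar R H).lTensor H (Δ 1 * (1 ⊗ₜ[R] εₜ h)) = Δ 1 * (1 ⊗ₜ[R] εₜ h) := by
  set z := εₜ h
  let f : H ⊗[R] H →ₗ[R] H := (TensorProduct.lid R H).toLinearMap ∘ₗ
    LinearMap.rTensor H ε ∘ₗ LinearMap.mulRight R (Δ z)
  have hf_comul (x : H) : f (Δ x) = x * z := by
    simp [f, ← hpre x z]
  have hf_mul_comul_one (x : H) : f ((x ⊗ₜ[R] 1) * Δ 1) = epsTbar R H (x * z) := by
    simp only [f, LinearMap.comp_apply, LinearMap.mulRight_apply, mul_assoc, ← hpre 1 z,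
      one_mul]
    rw [comul_epsT_of_LC hlc h, ← mul_assoc, Algebra.TensorProduct.tmul_mul_tmul, one_mul]
    exact (epsTbar_apply _).symm
  have key := congrArg (LinearMap.lTensor H f) (sum_tmul_comul_eq_of_LC (ℛ R 1) hlc)
  simp only [map_sum, LinearMap.lTensor_tmul, hf_comul, hf_mul_comul_one] at key
  rw [← (ℛ R (1 : H)).eq, Finset.sum_mul, map_sum]
  simp only [Algebra.TensorProduct.tmul_mul_tmul, mul_one, LinearMap.lTensor_tmul]
  exact key.symm

theorem epsT_epsT_mul (hpre : ComulMul R H) (hrc : RC R H) (hrm : RM R H) (h x : H) :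
    εₜ (εₜ h * x) = εₜ h * εₜ x := by
  have key := congrArg ((TensorProduct.lid R H).toLinearMap ∘ₗ
    LinearMap.rTensor H (ε ∘ₗ LinearMap.mulRight R x))
    (lTensor_epsT_one_tmul_epsT_mul_comul_one hpre hrc h)
  rw [← (ℛ R (1 : H)).eq] at key
  simp only [Finset.mul_sum, Algebra.TensorProduct.tmul_mul_tmul, one_mul, map_sum,
    LinearMap.lTensor_tmul, LinearMap.comp_apply, LinearEquiv.coe_coe, LinearMap.rTensor_tmul,
    LinearMap.mulRight_apply, TensorProduct.lid_tmul] at key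
  rw [← epsT_mul_epsT_right hrm, epsT_eq_sum (ℛ R 1) x, Finset.mul_sum, map_sum]
  simpa [mul_smul_comm] using key

/-- Both sides are `∑ ε(1₍₂₎ y 1₍₁'₎) 1₍₁₎ ⊗ 1₍₂'₎`. -/
theorem lTensor_epsTbar_comul_one_mul_one_tmul (y : H) :
    (epsTbar R H).lTensor H (Δ 1 * (1 ⊗ₜ[R] y)) =
      (epsSbar R H).rTensor H ((y ⊗ₜ[R] 1) * Δ 1) := by
  simp only [← (ℛ R (1 : H)).eq, Finset.sum_mul, Finset.mul_sum, map_sum,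
    Algebra.TensorProduct.tmul_mul_tmul, one_mul, mul_one, LinearMap.lTensor_tmul,
    LinearMap.rTensor_tmul, epsTbar_eq_sum (ℛ R 1), epsSbar_eq_sum (ℛ R 1),
    TensorProduct.tmul_sum, TensorProduct.sum_tmul, TensorProduct.tmul_smul,
    TensorProduct.smul_tmul', mul_assoc]
  exact Finset.sum_comm

theorem mul'_rTensor_epsT (t : H ⊗[R] H) :
    LinearMap.mul' R H ((εₜ).rTensor H t) =
      TensorProduct.lid R H (LinearMap.rTensor H ε (Δ 1 * t)) := by
  induction t using TensorProduct.induction_on with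
  | zero => simp
  | tmul x y =>
    simp [epsT_eq_sum (ℛ R 1), ← (ℛ R (1 : H)).eq, Finset.sum_mul, map_sum]
  | add t u ht hu => simp [mul_add, ht, hu]

variable (R H) in
noncomputable def separabilityIdempotent : H ⊗[R] H := (εₜ).rTensor H (Δ 1)

theorem map_epsT_epsT_separabilityIdempotent (hrm : RM R H) (hrc : RC R H) :
    map εₜ εₜ (separabilityIdempotent R H) = separabilityIdempotent R H := by
  conv_rhs => rw [separabilityIdempotent, ← lTensor_epsT_comul_one hrc]
  rw [separabilityIdempotent, LinearMap.rTensor, LinearMap.lTensor, map_map, map_map]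
  congr 2
  ext x
  exact epsT_epsT hrm x

theorem epsT_tmul_one_mul_separabilityIdempotent (hpre : ComulMul R H) (hlm : LM R H)
    (hrm : RM R H) (hlc : LC R H) (hrc : RC R H) (h : H) :
    (εₜ h ⊗ₜ[R] 1) * separabilityIdempotent R H =
      separabilityIdempotent R H * (1 ⊗ₜ[R] εₜ h) := by
  have hleft : (εₜ h ⊗ₜ[R] 1) * separabilityIdempotent R H =
      (εₜ).rTensor H ((εₜ h ⊗ₜ[R] 1) * Δ 1) := by
    simp [separabilityIdempotent, ← (ℛ R (1 : H)).eq, Finset.mul_sum, map_sum,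
      epsT_epsT_mul hpre hrc hrm]
  have hright : separabilityIdempotent R H * (1 ⊗ₜ[R] εₜ h) =
      (εₜ).rTensor H (Δ 1 * (1 ⊗ₜ[R] εₜ h)) := by
    simp [separabilityIdempotent, ← (ℛ R (1 : H)).eq, Finset.sum_mul, map_sum]
  rw [hleft, hright, ← lTensor_epsTbar_comul_one_mul_one_tmul_epsT hpre hlc h,
    lTensor_epsTbar_comul_one_mul_one_tmul, ← LinearMap.rTensor_comp_apply]
  congr 2
  ext x
  exact (epsT_epsSbar hlm x).symm

theorem lid_map_counit_separabilityIdempotent :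
    TensorProduct.lid R H (map ε LinearMap.id (separabilityIdempotent R H)) = 1 := by
  simp [separabilityIdempotent, ← (ℛ R (1 : H)).eq, map_sum, counit_epsT]

theorem rid_map_counit_separabilityIdempotent :
    TensorProduct.rid R H (map LinearMap.id ε (separabilityIdempotent R H)) = 1 := by
  calc TensorProduct.rid R H (map LinearMap.id ε (separabilityIdempotent R H))
      = εₜ (∑ i ∈ (ℛ R 1).index, ε ((ℛ R 1).right i) • (ℛ R 1).left i) := by
        simp only [separabilityIdempotent, ← (ℛ R (1 : H)).eq, map_sum, map_smul,
          LinearMap.rTensor_tmul, map_tmul, LinearMap.id_coe, id_eq, TensorProduct.rid_tmul]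
    _ = 1 := by rw [sum_counit_right_smul, epsT_one]

theorem mul'_separabilityIdempotent (hpre : ComulMul R H) :
    LinearMap.mul' R H (separabilityIdempotent R H) = 1 := by
  rw [separabilityIdempotent, mul'_rTensor_epsT, ← hpre, mul_one]
  simp

end WeakBialgebra

/-- For a weak bialgebra `H` (a prebialgebra satisfying (lm), (rm), (lc)
and (rc)), `H_t = Im(ε_t)` is a Frobenius separable algebra with separability
idempotent `e_t = ε_t(1₍₁₎) ⊗ 1₍₂₎` and Frobenius functional the restriction of `ε`:
`e_t` lies in `H_t ⊗ H_t`, `(z⊗1)e_t = e_t(1⊗z)` for all `z ∈ H_t`,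
`ε(ε_t(1₍₁₎))1₍₂₎ = 1 = ε_t(1₍₁₎)ε(1₍₂₎)` and `ε_t(1₍₁₎)1₍₂₎ = 1`. -/
theorem weak_bialgebra_Ht_frobenius_separable
    (R H : Type) [CommRing R] [Ring H] [Algebra R H] [Coalgebra R H]
    (hpre : ComulMul R H)
    (hlm : LM R H) (hrm : RM R H) (hlc : LC R H) (hrc : RC R H)
    (et : H ⊗[R] H)
    (het : et = (TensorProduct.map (epsT R H) LinearMap.id)
      (Coalgebra.comul (R := R) (1 : H))) :
    (TensorProduct.map (epsT R H) (epsT R H)) et = et ∧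
    (∀ z ∈ Set.range (epsT R H), (z ⊗ₜ[R] (1 : H)) * et = et * ((1 : H) ⊗ₜ[R] z)) ∧
    (TensorProduct.lid R H) ((TensorProduct.map Coalgebra.counit LinearMap.id) et) = 1 ∧
    (TensorProduct.rid R H) ((TensorProduct.map LinearMap.id Coalgebra.counit) et) = 1 ∧
    (LinearMap.mul' R H) et = 1 := by
  subst het
  refine ⟨WeakBialgebra.map_epsT_epsT_separabilityIdempotent hrm hrc, ?_,
    WeakBialgebra.lid_map_counit_separabilityIdempotent,
    WeakBialgebra.rid_map_counit_separabilityIdempotent,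
    WeakBialgebra.mul'_separabilityIdempotent hpre⟩
  rintro _ ⟨h, rfl⟩
  exact WeakBialgebra.epsT_tmul_one_mul_separabilityIdempotent hpre hlm hrm hlc hrc h
end
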